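/- In any model B of the theory T_α (which axiomatizes the α-back-and-forth structure 𝔹 of T): if σ is a β-bf-type with β ≤ α and B ⊨ φ_σ(b̄), then σ ≤_β (B,b̄); and if β < α and B ⊨ ψ_σ(b̄), then σ ≡_β (B,b̄). -/

import Mathlib

attribute [local instance] Classical.propDecidable

noncomputable section

/-! ## Basic oracle computability on Cantor space -/

abbrev Cantor := ℕ → Bool

/-- Kleene-style partial recursion relative to an oracle `O`. -/
inductive RecursiveInO (O : ℕ →. ℕ) : (ℕ →. ℕ) → Prop
  | oracle : RecursiveInO O O
  | zero : RecursiveInO O (pure 0)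
  | succ : RecursiveInO O Nat.succ
  | left : RecursiveInO O ↑fun n : ℕ => n.unpair.1
  | right : RecursiveInO O ↑fun n : ℕ => n.unpair.2
  | pair {f g} : RecursiveInO O f → RecursiveInO O g →
      RecursiveInO O fun n => Nat.pair <$> f n <*> g n
  | comp {f g} : RecursiveInO O f → RecursiveInO O g →
      RecursiveInO O fun n => g n >>= f
  | prec {f g} : RecursiveInO O f → RecursiveInO O g →
      RecursiveInO O (Nat.unpaired fun a n =>
        n.rec (f a) fun y IH => do let i ← IH; g (Nat.pair a (Nat.pair y i)))
  | rfind {f} : RecursiveInO O f →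
      RecursiveInO O fun a => Nat.rfind fun n => (fun m => m = 0) <$> f (Nat.pair a n)

def asOracle (X : Cantor) : ℕ →. ℕ := fun n => Part.some (cond (X n) 1 0)

/-- `TRed X Y` : `X` is Turing reducible to `Y` (`X ≤_T Y`). -/
def TRed (X Y : Cantor) : Prop := RecursiveInO (asOracle Y) (asOracle X)

/-- Turing equivalence. -/
def TEquiv (X Y : Cantor) : Prop := TRed X Y ∧ TRed Y X

/-- Turing join `X ⊕ Y`. -/
def joinC (X Y : Cantor) : Cantor := fun n => if n % 2 = 0 then X (n / 2) else Y (n / 2)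

def evens (Z : Cantor) : Cantor := fun n => Z (2 * n)
def odds (Z : Cantor) : Cantor := fun n => Z (2 * n + 1)

/-- `X` is (outright) computable. -/
def ComputableC (X : Cantor) : Prop := TRed X fun _ => false

/-! ## Ordinals computable in an oracle; `ω₁^X` -/

/-- The strict order relation on the field coded by `r` (as a set of codes of pairs). -/
def relOf (r : Cantor) :
    {n : ℕ // r (Nat.pair n n) = true} → {n : ℕ // r (Nat.pair n n) = true} → Prop :=
  fun a b => r (Nat.pair a.1 b.1) = true ∧ a.1 ≠ b.1

/-- `r` codes a well-ordering of order type `α`. -/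
def CodesOrdinal (r : Cantor) (α : Ordinal) : Prop :=
  ∃ h : IsWellOrder _ (relOf r), @Ordinal.type _ (relOf r) h = α

/-- `ω₁^X`: the least ordinal with no `X`-computable copy. -/
def omega1C (X : Cantor) : Ordinal :=
  sInf {α : Ordinal | ¬ ∃ r : Cantor, TRed r X ∧ CodesOrdinal r α}

/-- `α` is admissible: of the form `ω₁^X`. -/
def AdmissibleOrd (α : Ordinal) : Prop := ∃ X : Cantor, omega1C X = α

/-! ## Projective sets and projective determinacy -/

/-- Projective subsets of Cantor space. -/
inductive ProjectiveSet : Set Cantor → Prop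
  | borel {s : Set Cantor} : MeasurableSet s → ProjectiveSet s
  | compl {s} : ProjectiveSet s → ProjectiveSet sᶜ
  | proj {s} : ProjectiveSet s → ProjectiveSet {X | ∃ Y : Cantor, joinC X Y ∈ s}

/-- A function `2^ω → 2^ω` is projective if its graph is. -/
def ProjFun (g : Cantor → Cantor) : Prop := ProjectiveSet {Z | odds Z = g (evens Z)}

/-- History of a play of the Gale–Stewart game where I follows `σ`, II follows `τ`. -/
def histAux (σ τ : List Bool → Bool) : ℕ → List Bool
  | 0 => []
  | n + 1 => histAux σ τ n ++ [if n % 2 = 0 then σ (histAux σ τ n) else τ (histAux σ τ n)]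

/-- The infinite play produced by strategies `σ` (player I) and `τ` (player II). -/
def play (σ τ : List Bool → Bool) : Cantor :=
  fun n => if n % 2 = 0 then σ (histAux σ τ n) else τ (histAux σ τ n)

/-- The game with payoff `A` is determined. -/
def DeterminedG (A : Set Cantor) : Prop :=
  (∃ σ, ∀ τ, play σ τ ∈ A) ∨ (∃ τ, ∀ σ, play σ τ ∉ A)

/-- Projective determinacy. -/
def PD : Prop := ∀ A : Set Cantor, ProjectiveSet A → DeterminedG A

/-! ## Trees on `2^{<ω}` -/

def seg (Y : Cantor) (n : ℕ) : List Bool := (List.range n).map Y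

def IsTree (P : List Bool → Bool) : Prop :=
  P [] = true ∧ ∀ σ b, P (σ ++ [b]) = true → P σ = true

def IsPathT (P : List Bool → Bool) (Y : Cantor) : Prop := ∀ n, P (seg Y n) = true

def IsSplit (P : List Bool → Bool) (σ : List Bool) : Prop :=
  P (σ ++ [false]) = true ∧ P (σ ++ [true]) = true

def PerfectT (P : List Bool → Bool) : Prop :=
  ∀ σ, P σ = true → ∃ τ, σ <+: τ ∧ IsSplit P τ

def PrunedT (P : List Bool → Bool) : Prop :=
  ∀ σ, P σ = true → P (σ ++ [false]) = true ∨ P (σ ++ [true]) = true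

/-- The tree as an element of Cantor space (via coding of finite strings). -/
def treeSet (P : List Bool → Bool) : Cantor := fun n =>
  match (Encodable.decode n : Option (List Bool)) with
  | some σ => P σ
  | none => false

/-- A perfect (pruned) tree all of whose paths compute it. -/
def PointedT (P : List Bool → Bool) : Prop :=
  IsTree P ∧ PrunedT P ∧ PerfectT P ∧ ∀ Y, IsPathT P Y → TRed (treeSet P) Y

/-- Number of splitting levels of `P` along `Y` below `k`. -/
def splitsBelow (P : List Bool → Bool) (Y : Cantor) (k : ℕ) : ℕ :=
  ((List.range k).filter fun j => decide (IsSplit P (seg Y j))).length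

/-- `Y` is the path of `P` obtained by following `X` at every split of `P`. -/
def FollowsT (P : List Bool → Bool) (X Y : Cantor) : Prop :=
  IsPathT P Y ∧ (∀ n, ∃ k, n ≤ k ∧ IsSplit P (seg Y k)) ∧
    ∀ k, IsSplit P (seg Y k) → Y k = X (splitsBelow P Y k)

/-! ## Countable structures and infinitary logic -/

/-- A structure on domain `ℕ` in the relational language whose `i`-th symbol has arity `ar i`. -/
def Str (ar : ℕ → ℕ) := (i : ℕ) → (Fin (ar i) → ℕ) → Prop

/-- `L_{ω₁,ω}` formulas (variables indexed by `ℕ`, countable conjunctions). -/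
inductive IForm (ar : ℕ → ℕ) : Type
  | atom (i : ℕ) (v : Fin (ar i) → ℕ)
  | eq (x y : ℕ)
  | not (φ : IForm ar)
  | conj (φs : ℕ → IForm ar)
  | all (x : ℕ) (φ : IForm ar)

variable {ar : ℕ → ℕ}

def Sat (A : Str ar) : (ℕ → ℕ) → IForm ar → Prop
  | s, .atom i v => A i fun j => s (v j)
  | s, .eq x y => s x = s y
  | s, .not φ => ¬ Sat A s φ
  | s, .conj φs => ∀ n, Sat A s (φs n)
  | s, .all x φ => ∀ a : ℕ, Sat A (Function.update s x a) φ

def freeVars : IForm ar → Set ℕ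
  | .atom _ v => Set.range v
  | .eq x y => {x, y}
  | .not φ => freeVars φ
  | .conj φs => ⋃ n, freeVars (φs n)
  | .all x φ => freeVars φ \ {x}

/-- A sentence: no free variables. -/
def SentenceF (φ : IForm ar) : Prop := freeVars φ = ∅

/-- Satisfaction of a sentence. -/
def SatS (A : Str ar) (φ : IForm ar) : Prop := Sat A (fun _ => 0) φ

def IForm.disj (φs : ℕ → IForm ar) : IForm ar := .not (.conj fun n => .not (φs n))
def IForm.ex (x : ℕ) (φ : IForm ar) : IForm ar := .not (.all x (.not φ))
def IForm.exs (l : List ℕ) (φ : IForm ar) : IForm ar := l.foldr IForm.ex φ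
def IForm.alls (l : List ℕ) (φ : IForm ar) : IForm ar := l.foldr IForm.all φ
def IForm.and (φ ψ : IForm ar) : IForm ar := .conj fun n => if n = 0 then φ else ψ

/-- Finitary quantifier-free formulas. -/
inductive QFree : IForm ar → Prop
  | atom {i v} : QFree (.atom i v)
  | eq {x y} : QFree (.eq x y)
  | not {φ} : QFree φ → QFree (.not φ)
  | and {φ ψ} : QFree φ → QFree ψ → QFree (φ.and ψ)

mutual
/-- `Σ^in_α` formulas. -/
inductive IsSig : Ordinal.{0} → IForm ar → Prop
  | qf {α : Ordinal} {φ : IForm ar} : QFree φ → IsSig α φ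
  | comp {α : Ordinal} (β : ℕ → Ordinal) (vs : ℕ → List ℕ) (φs : ℕ → IForm ar) :
      (∀ n, β n < α) → (∀ n, IsPi (β n) (φs n)) →
      IsSig α (IForm.disj fun n => IForm.exs (vs n) (φs n))
/-- `Π^in_α` formulas. -/
inductive IsPi : Ordinal.{0} → IForm ar → Prop
  | qf {α : Ordinal} {φ : IForm ar} : QFree φ → IsPi α φ
  | comp {α : Ordinal} (β : ℕ → Ordinal) (vs : ℕ → List ℕ) (φs : ℕ → IForm ar) :
      (∀ n, β n < α) → (∀ n, IsSig (β n) (φs n)) →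
      IsPi α (.conj fun n => IForm.alls (vs n) (φs n))
end

/-- `Σ^in_α`-elementary equivalence (`A ≡_α B`). -/
def SigEquiv (α : Ordinal) (A B : Str ar) : Prop :=
  ∀ φ : IForm ar, IsSig α φ → SentenceF φ → (SatS A φ ↔ SatS B φ)

/-- The assignment sending variable `i` to the `i`-th entry of the tuple `a`. -/
def asn (a : List ℕ) : ℕ → ℕ := fun i => a.getD i 0

/-- Every `Π^in_α` formula (with free variables among the tuple) true of `ā` in `A`
is true of `b̄` in `B`. -/
def PiTypeSub (α : Ordinal) (A : Str ar) (a : List ℕ) (B : Str ar) (b : List ℕ) : Prop :=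
  ∀ φ : IForm ar, IsPi α φ → freeVars φ ⊆ Set.Iio a.length →
    Sat A (asn a) φ → Sat B (asn b) φ

/-! ## Back-and-forth relations -/

/-- `ā` and `b̄` satisfy the same atomic formulas among the first `|ā|` symbols. -/
def atomEquiv (A : Str ar) (a : List ℕ) (B : Str ar) (b : List ℕ) : Prop :=
  a.length = b.length ∧
  (∀ p q, p < a.length → q < a.length →
    (a.getD p 0 = a.getD q 0 ↔ b.getD p 0 = b.getD q 0)) ∧
  (∀ i, i < a.length → ∀ v : Fin (ar i) → ℕ, (∀ j, v j < a.length) →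
    (A i (fun j => a.getD (v j) 0) ↔ B i fun j => b.getD (v j) 0))

/-- The `α`-back-and-forth relations `(A,ā) ≤_α (B,b̄)`. -/
def BFLe (α : Ordinal.{0}) (A : Str ar) (a : List ℕ) (B : Str ar) (b : List ℕ) : Prop :=
  if α = 0 then atomEquiv A a B b
  else ∀ (d : List ℕ) (γ : Ordinal.{0}) (hγ : γ < α),
    ∃ c : List ℕ, c.length = d.length ∧ BFLe γ B (b ++ d) A (a ++ c)
termination_by α
decreasing_by exact hγ

/-- `(A,ā) ≡_α (B,b̄)`. -/
def BFEq (α : Ordinal) (A : Str ar) (a : List ℕ) (B : Str ar) (b : List ℕ) : Prop :=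
  BFLe α A a B b ∧ BFLe α B b A a

/-- `(C,c̄)` belongs to `ext_β(A,ā)`: it is `≤_β` some `(A, ād̄)`. -/
def ExtMem (β : Ordinal) (C : Str ar) (c : List ℕ) (A : Str ar) (a : List ℕ) : Prop :=
  ∃ d : List ℕ, c.length = a.length + d.length ∧ BFLe β C c A (a ++ d)

/-- Re-arrangement `π_ι` of a tuple. -/
def projT (ι : List ℕ) (a : List ℕ) : List ℕ := ι.map fun j => a.getD j 0

/-! ## Isomorphism, diagrams, copies, spectra, Scott rank -/

def IsoStr (A B : Str ar) : Prop :=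
  ∃ e : ℕ ≃ ℕ, ∀ i v, A i v ↔ B i fun j => e (v j)

/-- `D` is (the characteristic function of) the atomic diagram of `B`. -/
def DiagOf (B : Str ar) (D : Cantor) : Prop :=
  ∀ i (v : Fin (ar i) → ℕ),
    (B i v ↔ D (Nat.pair i (Encodable.encode (List.ofFn v))) = true)

/-- `X` computes a copy of `A`. -/
def ComputesCopy (X : Cantor) (A : Str ar) : Prop :=
  ∃ B D, IsoStr A B ∧ DiagOf B D ∧ TRed D X

/-- `ω₁^A = min{ω₁^X : X computes a copy of A}`. -/
def omega1Str (A : Str ar) : Ordinal :=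
  sInf {β : Ordinal | ∃ X, ComputesCopy X A ∧ omega1C X = β}

/-- `ω₁^{A,Y} = min{ω₁^X : X ≥_T Y, X computes a copy of A}`. -/
def omega1StrRel (A : Str ar) (Y : Cantor) : Ordinal :=
  sInf {β : Ordinal | ∃ X, TRed Y X ∧ ComputesCopy X A ∧ omega1C X = β}

/-- The two tuples satisfy the same `L_{ω₁,ω}` formulas in `A`. -/
def AllTypeEq (A : Str ar) (a b : List ℕ) : Prop :=
  ∀ φ : IForm ar, freeVars φ ⊆ Set.Iio a.length → (Sat A (asn a) φ ↔ Sat A (asn b) φ)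

/-- `ρ_A(ā)`: least `α` such that the `Π^in_α` type of `ā` determines its full type. -/
def rhoSR (A : Str ar) (a : List ℕ) : Ordinal :=
  sInf {α : Ordinal | ∀ b : List ℕ, b.length = a.length →
    PiTypeSub α A a A b → AllTypeEq A a b}

/-- Scott rank. -/
def SR (A : Str ar) : Ordinal := ⨆ a : List ℕ, rhoSR A a + 1

/-! ## Counting models -/

def CountablyManyModels (T : IForm ar) : Prop :=
  ∃ S : Set (Str ar), S.Countable ∧ ∀ A, SatS A T → ∃ B ∈ S, IsoStr A B

/-- `T` is scattered: countably many `≡_α`-classes of models for each `α < ω₁`. -/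
def ScatteredT (T : IForm ar) : Prop :=
  ∀ α : Ordinal, α < (Cardinal.aleph 1).ord →
    ∃ S : Set (Str ar), S.Countable ∧ ∀ A, SatS A T → ∃ B ∈ S, SatS B T ∧ SigEquiv α A B

/-- Counterexample to Vaught's conjecture. -/
def CexVC (T : IForm ar) : Prop := ScatteredT T ∧ ¬ CountablyManyModels T

/-- `T` has exactly `ℵ₁` many models up to isomorphism. -/
def Aleph1ManyModels (T : IForm ar) : Prop :=
  Cardinal.mk (Quot fun A B : {M : Str ar // SatS M T} => IsoStr A.1 B.1) = Cardinal.aleph 1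

/-- Minimal counterexample to Vaught's conjecture. -/
def MinimalCex (T : IForm ar) : Prop :=
  Aleph1ManyModels T ∧ ScatteredT T ∧
    ∀ φ : IForm ar, SentenceF φ →
      CountablyManyModels (T.and φ) ∨ CountablyManyModels (T.and φ.not)

/-! ## Computable infinitary formulas -/

/-- `FCodes ar c φ`: `c` is a code of the computable infinitary formula `φ`. -/
inductive FCodes (ar : ℕ → ℕ) : ℕ → IForm ar → Prop
  | atom (i : ℕ) (v : Fin (ar i) → ℕ) :
      FCodes ar (Nat.pair 0 (Nat.pair i (Encodable.encode (List.ofFn fun j => v j)))) (.atom i v)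
  | eq (x y : ℕ) : FCodes ar (Nat.pair 1 (Nat.pair x y)) (.eq x y)
  | not {c φ} : FCodes ar c φ → FCodes ar (Nat.pair 2 c) (.not φ)
  | all {c φ} (x : ℕ) : FCodes ar c φ → FCodes ar (Nat.pair 3 (Nat.pair x c)) (.all x φ)
  | conj (c : Nat.Partrec.Code) (g : ℕ → ℕ) (φs : ℕ → IForm ar) :
      (∀ n, g n ∈ c.eval n) → (∀ n, FCodes ar (g n) (φs n)) →
      FCodes ar (Nat.pair 4 (Encodable.encode c)) (.conj φs)

/-- A computable infinitary (`L^c_{ω₁,ω}`) formula. -/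
def ComputableForm (φ : IForm ar) : Prop := ∃ c, FCodes ar c φ

/-! ## Finite diagrams -/

/-- `m` codes an atomic fact (among the first `|ā|` symbols) true of `ā` in `A`. -/
def FinDiagMem (A : Str ar) (a : List ℕ) (m : ℕ) : Prop :=
  ∃ (i : ℕ) (l : List ℕ), m = Nat.pair i (Encodable.encode l) ∧ i < a.length ∧
    l.length = ar i ∧ (∀ j ∈ l, j < a.length) ∧ A i fun j => a.getD (l.getD (j : ℕ) 0) 0

def tuplesBelow (k : ℕ) : ℕ → List (List ℕ)
  | 0 => [[]]
  | n + 1 => (List.range k).flatMap fun x => (tuplesBelow k n).map fun l => x :: l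

def atomCodes (ar : ℕ → ℕ) (k : ℕ) : List ℕ :=
  (List.range k).flatMap fun i => (tuplesBelow k (ar i)).map fun l => Nat.pair i (Encodable.encode l)

/-- A number coding the atomic diagram `D_A(ā)` of the tuple `ā` in `A`
(over the first `|ā|` symbols of the language). -/
def diagCode (A : Str ar) (a : List ℕ) : ℕ :=
  Nat.pair a.length <| Encodable.encode <|
    (atomCodes ar a.length).filter fun m => decide (FinDiagMem A a m)

/-- A computably enumerable set of naturals. -/
def CEset (S : Set ℕ) : Prop := ∃ c : Nat.Partrec.Code, ∀ n, n ∈ S ↔ (c.eval n).Dom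

/-! ## Hyperarithmetic reducibility (via the Δ¹₁ = HYP characterization) -/

def Pi11In (X : Cantor) (S : Set ℕ) : Prop :=
  ∃ R : Cantor, TRed R X ∧ ∀ n, n ∈ S ↔
    ∀ f : ℕ → ℕ, ∃ k, R (Nat.pair n (Encodable.encode ((List.range k).map f))) = true

/-- `Y` is hyperarithmetic in `X` (i.e. `Δ¹₁(X)`). -/
def HypIn (Y X : Cantor) : Prop :=
  Pi11In X {n | Y n = true} ∧ Pi11In X {n | Y n = false}

/-- `A` has an `X`-hyperarithmetic copy. -/
def HypCopy (X : Cantor) (A : Str ar) : Prop :=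
  ∃ B D, IsoStr A B ∧ DiagOf B D ∧ HypIn D X

/-! ## The theory `T_α` of the `α`-back-and-forth structure, semantically -/

/-- A structure in the extended language `L_α`: a base `L`-structure together with
interpretations of the relations `φ_σ`, where the `β`-bf-type `σ` is represented by a
pair `(C, c̄)` (a model of `T` with a distinguished tuple). -/
structure ExtModel (ar : ℕ → ℕ) where
  base : Str ar
  Phi : Ordinal.{0} → Str ar → List ℕ → List ℕ → Prop

/-- Interpretation of `ψ_σ(b̄) := ⋁_{σ' ∈ bf_α, (σ')_β = σ} φ_{σ'}(b̄)`,
with `σ` represented by `(C, c̄)`. -/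
def PsiH (T : IForm ar) (α : Ordinal.{0}) (M : ExtModel ar) (β : Ordinal.{0})
    (C : Str ar) (c b : List ℕ) : Prop :=
  ∃ (C' : Str ar) (c' : List ℕ), SatS C' T ∧ c'.length = b.length ∧
    BFEq β C' c' C c ∧ M.Phi α C' c' b

/-- `M` is a model of the theory `T_α` axiomatizing the `α`-bf-structure of `T`:
(invariance of the symbols `φ_σ` in the representative of `σ`), (T1) every tuple realizes
exactly one `β`-bf-type, (T2) the recursive definition of `φ_σ`, and (T3) the
implications of `ψ_σ`. -/
def ModelsTAlpha (T : IForm ar) (α : Ordinal.{0}) (M : ExtModel ar) : Prop :=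
  (∀ β ≤ α, ∀ (C : Str ar) (c : List ℕ) (C' : Str ar) (c' : List ℕ) (b : List ℕ),
      SatS C T → SatS C' T → BFEq β C c C' c' → (M.Phi β C c b ↔ M.Phi β C' c' b)) ∧
  (∀ b : List ℕ, ∃ (C : Str ar) (c : List ℕ), SatS C T ∧ c.length = b.length ∧
      M.Phi α C c b) ∧
  (∀ β < α, ∀ (b : List ℕ) (C : Str ar) (c : List ℕ) (C' : Str ar) (c' : List ℕ),
      SatS C T → SatS C' T → PsiH T α M β C c b → PsiH T α M β C' c' b →
      BFEq β C c C' c') ∧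
  (∀ β ≤ α, ∀ (C : Str ar) (c : List ℕ), SatS C T → ∀ b : List ℕ,
      (M.Phi β C c b ↔ b.length = c.length ∧
        (β = 0 → atomEquiv C c M.base b) ∧
        (∀ γ < β, ∀ (D : Str ar) (d : List ℕ), SatS D T → ¬ ExtMem γ D d C c →
          ∀ y : List ℕ, d.length = b.length + y.length → ¬ M.Phi γ D d (b ++ y)))) ∧
  (∀ β < α, ∀ (C : Str ar) (c b : List ℕ), SatS C T → PsiH T α M β C c b →
      M.Phi β C c b ∧ ∀ γ < β, ∀ (D : Str ar) (d : List ℕ), SatS D T →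
        ExtMem γ D d C c →
        ∃ y : List ℕ, d.length = b.length + y.length ∧ M.Phi γ D d (b ++ y))

/-! ## Presentations of the `α`-back-and-forth structure -/

/-- A presentation `𝔹` of the `α`-bf-structure of `T`: an enumeration of the bf-types
of levels `≤ α` (given by levels and representatives), together with an oracle `B`
coding the relations `≤_β`, the projections `(·)_β` and `π_ι`, the extension relations
`ext`, and the atomic diagrams of the `0`-bf-types. -/
structure BFPres (ar : ℕ → ℕ) (T : IForm ar) (α : Ordinal.{0}) where
  B : Cantor
  lvl : ℕ → Ordinal.{0}
  repS : ℕ → Str ar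
  repT : ℕ → List ℕ
  lvl_le : ∀ n, lvl n ≤ α
  rep_models : ∀ n, SatS (repS n) T
  surj : ∀ β ≤ α, ∀ (A : Str ar) (a : List ℕ), SatS A T →
    ∃ n, lvl n = β ∧ (repT n).length = a.length ∧ BFEq β (repS n) (repT n) A a
  le_code : ∀ m n, (B (Nat.pair 0 (Nat.pair m n)) = true ↔
    lvl m = lvl n ∧ BFLe (lvl m) (repS m) (repT m) (repS n) (repT n))
  proj_code : ∀ m n, (B (Nat.pair 1 (Nat.pair m n)) = true ↔
    lvl m ≤ lvl n ∧ BFEq (lvl m) (repS m) (repT m) (repS n) (repT n))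
  ext_code : ∀ m n, (B (Nat.pair 2 (Nat.pair m n)) = true ↔
    lvl m < lvl n ∧ ExtMem (lvl m) (repS m) (repT m) (repS n) (repT n))
  pi_code : ∀ m n (ι : List ℕ),
    (B (Nat.pair 3 (Nat.pair m (Nat.pair n (Encodable.encode ι)))) = true ↔
      lvl m = lvl n ∧ (∀ j ∈ ι, j < (repT n).length) ∧
      BFEq (lvl m) (repS m) (repT m) (repS n) (projT ι (repT n)))
  diag_code : ∀ m k, (B (Nat.pair 4 (Nat.pair m k)) = true ↔
    lvl m = 0 ∧ FinDiagMem (repS m) (repT m) k)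

end

/-!
Simultaneous induction on `β`. If `B ⊨ φ_σ(b̄)` and `d̄`, `γ < β` are given, (T1) gives `b̄d̄`
an `α`-type whose `γ`-part `τ` satisfies `B ⊨ ψ_τ(b̄d̄)`, so `τ ≡_γ (B,b̄d̄)` by induction; by
(T3) `B ⊨ φ_τ(b̄d̄)`, so (T2) forces `τ ∈ ext_γ(σ)`, which supplies the back-and-forth
witness. Conversely, if `B ⊨ ψ_σ(b̄)`, then for every extension `c̄ē` of a representative of `σ`,
(T3) yields `ȳ` with `B ⊨ φ_τ(b̄ȳ)` for the `γ`-type `τ` of `c̄ē`, and induction gives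
`τ ≤_γ (B,b̄ȳ)`: this is `(B,b̄) ≤_β σ`.
-/

section BackAndForth

variable {ar : ℕ → ℕ}

theorem atomEquiv_refl (A : Str ar) (a : List ℕ) : atomEquiv A a A a :=
  ⟨rfl, fun _ _ _ _ => Iff.rfl, fun _ _ _ _ => Iff.rfl⟩

theorem atomEquiv_symm {A B : Str ar} {a b : List ℕ} (h : atomEquiv A a B b) :
    atomEquiv B b A a := by
  obtain ⟨hlen, heq, hrel⟩ := h
  exact ⟨hlen.symm, fun p q hp hq => (heq p q (by omega) (by omega)).symm,
    fun i hi v hv => (hrel i (by omega) v fun j => by have := hv j; omega).symm⟩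

theorem atomEquiv_trans {A B C : Str ar} {a b c : List ℕ} (h : atomEquiv A a B b)
    (h' : atomEquiv B b C c) : atomEquiv A a C c := by
  obtain ⟨hlen, heq, hrel⟩ := h
  obtain ⟨hlen', heq', hrel'⟩ := h'
  exact ⟨hlen.trans hlen', fun p q hp hq => (heq p q hp hq).trans (heq' p q (by omega) (by omega)),
    fun i hi v hv => (hrel i hi v hv).trans (hrel' i (by omega) v fun j => by have := hv j; omega)⟩

theorem BFLe_zero {A B : Str ar} {a b : List ℕ} : BFLe 0 A a B b ↔ atomEquiv A a B b := by
  rw [BFLe]; simp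

theorem BFLe_of_ne_zero {β : Ordinal} (hβ : β ≠ 0) {A B : Str ar} {a b : List ℕ} :
    BFLe β A a B b ↔ ∀ (d : List ℕ) (γ : Ordinal), γ < β →
      ∃ c : List ℕ, c.length = d.length ∧ BFLe γ B (b ++ d) A (a ++ c) := by
  rw [BFLe]; simp [hβ]

theorem BFLe_refl (β : Ordinal) (A : Str ar) (a : List ℕ) : BFLe β A a A a := by
  induction β using WellFoundedLT.induction generalizing a with
  | _ β IH =>
    rcases eq_or_ne β 0 with rfl | hβ
    · exact BFLe_zero.mpr (atomEquiv_refl A a)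
    · exact (BFLe_of_ne_zero hβ).mpr fun d γ hγ => ⟨d, rfl, IH γ hγ (a ++ d)⟩

theorem BFLe_trans (β : Ordinal) {A B C : Str ar} {a b c : List ℕ} :
    BFLe β A a B b → BFLe β B b C c → BFLe β A a C c := by
  induction β using WellFoundedLT.induction generalizing A B C a b c with
  | _ β IH =>
    intro hAB hBC
    rcases eq_or_ne β 0 with rfl | hβ
    · exact BFLe_zero.mpr (atomEquiv_trans (BFLe_zero.mp hAB) (BFLe_zero.mp hBC))
    · rw [BFLe_of_ne_zero hβ] at hAB hBC ⊢
      intro d γ hγ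
      obtain ⟨e, he, hCB⟩ := hBC d γ hγ
      obtain ⟨f, hf, hBA⟩ := hAB e γ hγ
      exact ⟨f, hf.trans he, IH γ hγ hCB hBA⟩

theorem BFEq_refl (β : Ordinal) (A : Str ar) (a : List ℕ) : BFEq β A a A a :=
  ⟨BFLe_refl β A a, BFLe_refl β A a⟩

theorem ExtMem_append_self (β : Ordinal) (A : Str ar) (a e : List ℕ) :
    ExtMem β A (a ++ e) A a :=
  ⟨e, List.length_append, BFLe_refl β A (a ++ e)⟩

end BackAndForth

section ModelsTAlpha

variable {ar : ℕ → ℕ} {T : IForm ar} {α : Ordinal} {M : ExtModel ar}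

theorem PsiH_of_Phi (β : Ordinal) {C : Str ar} {c b : List ℕ} (hC : SatS C T)
    (hlen : c.length = b.length) (hPhi : M.Phi α C c b) : PsiH T α M β C c b :=
  ⟨C, c, hC, hlen, BFEq_refl β C c, hPhi⟩

def PhiSoundAt (T : IForm ar) (M : ExtModel ar) (β : Ordinal) : Prop :=
  ∀ (C : Str ar) (c b : List ℕ), SatS C T → c.length = b.length →
    M.Phi β C c b → BFLe β C c M.base b

def PsiSoundAt (T : IForm ar) (α : Ordinal) (M : ExtModel ar) (β : Ordinal) : Prop :=
  ∀ (C : Str ar) (c b : List ℕ), SatS C T → c.length = b.length →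
    PsiH T α M β C c b → BFEq β C c M.base b

theorem phiSoundAt_of_psiSoundAt_lt (hM : ModelsTAlpha T α M) {β : Ordinal} (hβ : β ≤ α)
    (IH : ∀ γ < β, PsiSoundAt T α M γ) : PhiSoundAt T M β := by
  obtain ⟨-, hT1, -, hT2, hT3⟩ := hM
  intro C c b hC hlen hPhi
  have hPhi' := (hT2 β hβ C c hC b).mp hPhi
  rcases eq_or_ne β 0 with rfl | hβ0
  · exact BFLe_zero.mpr (hPhi'.2.1 rfl)
  rw [BFLe_of_ne_zero hβ0]
  intro d γ hγ
  have hγα : γ < α := hγ.trans_le hβ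
  obtain ⟨D, e, hD, helen, hPhiα⟩ := hT1 (b ++ d)
  have hψ : PsiH T α M γ D e (b ++ d) := PsiH_of_Phi γ hD helen hPhiα
  have hExt : ExtMem γ D e C c := by
    by_contra hnot
    exact hPhi'.2.2 γ hγ D e hD hnot d (by rwa [List.length_append] at helen)
      (hT3 γ hγα D e (b ++ d) hD hψ).1
  obtain ⟨f, hflen, hle⟩ := hExt
  have hflen' : f.length = d.length := by rw [List.length_append] at helen; omega
  exact ⟨f, hflen', BFLe_trans γ (IH γ hγ D e (b ++ d) hD helen hψ).2 hle⟩

theorem BFLe_of_PsiH (hM : ModelsTAlpha T α M) {β : Ordinal} (hβ : β < α)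
    (IH : ∀ γ < β, PhiSoundAt T M γ) {C : Str ar} {c b : List ℕ} (hC : SatS C T)
    (hlen : c.length = b.length) (hψ : PsiH T α M β C c b) : BFLe β M.base b C c := by
  obtain ⟨-, -, -, hT2, hT3⟩ := hM
  obtain ⟨hPhi, hExt⟩ := hT3 β hβ C c b hC hψ
  rcases eq_or_ne β 0 with rfl | hβ0
  · exact BFLe_zero.mpr (atomEquiv_symm (((hT2 0 hβ.le C c hC b).mp hPhi).2.1 rfl))
  rw [BFLe_of_ne_zero hβ0]
  intro e γ hγ
  obtain ⟨y, hylen, hPhiγ⟩ := hExt γ hγ C (c ++ e) hC (ExtMem_append_self γ C c e)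
  have hylen' : y.length = e.length := by rw [List.length_append] at hylen; omega
  have hlen' : (c ++ e).length = (b ++ y).length := by
    rw [List.length_append, List.length_append]; omega
  exact ⟨y, hylen', IH γ hγ C (c ++ e) (b ++ y) hC hlen' hPhiγ⟩

theorem phiSoundAt_and_psiSoundAt (hM : ModelsTAlpha T α M) (β : Ordinal) :
    (β ≤ α → PhiSoundAt T M β) ∧ (β < α → PsiSoundAt T α M β) := by
  induction β using WellFoundedLT.induction with
  | _ β IH =>
    have hPhi : β ≤ α → PhiSoundAt T M β := fun hβ =>
      phiSoundAt_of_psiSoundAt_lt hM hβ fun γ hγ => (IH γ hγ).2 (hγ.trans_le hβ)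
    refine ⟨hPhi, fun hβ C c b hC hlen hψ => ⟨?_, ?_⟩⟩
    · have hT3 := hM.2.2.2.2
      exact hPhi hβ.le C c b hC hlen (hT3 β hβ C c b hC hψ).1
    · exact BFLe_of_PsiH hM hβ (fun γ hγ => (IH γ hγ).1 (hγ.trans hβ).le) hC hlen hψ

end ModelsTAlpha

/-- In any model of `T_α`: if `B ⊨ φ_σ(b̄)` for a `β`-bf-type `σ`
(`β ≤ α`) then `σ ≤_β (B,b̄)`; and if `β < α` and `B ⊨ ψ_σ(b̄)` then `σ ≡_β (B,b̄)`. -/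
theorem Talpha_types_correct {ar : ℕ → ℕ} (T : IForm ar) (α : Ordinal)
    (M : ExtModel ar) (hM : ModelsTAlpha T α M) :
    (∀ β ≤ α, ∀ (C : Str ar) (c b : List ℕ), SatS C T → c.length = b.length →
      M.Phi β C c b → BFLe β C c M.base b) ∧
    (∀ β < α, ∀ (C : Str ar) (c b : List ℕ), SatS C T → c.length = b.length →
      PsiH T α M β C c b → BFEq β C c M.base b) :=
  ⟨fun β hβ => (phiSoundAt_and_psiSoundAt hM β).1 hβ,
    fun β hβ => (phiSoundAt_and_psiSoundAt hM β).2 hβ⟩
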